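/- arXiv:0809.2420 — 6 statements merged into one kernel-verified Lean document; each statement's English description precedes it below -/
import Mathlib

section
/- Let f be an integrable complex-valued function on the unit circle, let n ≥ 1 and ℓ ≥ 1, and suppose D_j(f) ≠ 0 for all j with n ≤ j ≤ n+ℓ−1, so that the monic orthogonal polynomials Φ_n, Φ_{n+1}, …, Φ_{n+ℓ−1} with respect to f exist. Then D_n(z^ℓ f(z)) = ((−1)^{ℓ n} / Π_{j=1}^{ℓ−1} j!) · F_n · D_n(f), where F_n is the determinant of the ℓ×ℓ matrix whose (i,j) entry (i,j = 0,…,ℓ−1) is (d^i/dz^i) Φ_{n+j}(z) evaluated at z = 0. -/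
open Complex Real Filter Finset

noncomputable section

/-- The `k`-th Fourier coefficient of a function on the unit circle,
given as a function of the angle `θ`. -/
def fCoeff (h : ℝ → ℂ) (k : ℤ) : ℂ :=
  (1 / (2 * (Real.pi : ℂ))) *
    ∫ θ in (0:ℝ)..(2 * Real.pi), h θ * Complex.exp (-Complex.I * k * θ)

/-- The `n`-dimensional Toeplitz determinant `D_n(h)`. -/
def toeplitzDet (h : ℝ → ℂ) (n : ℕ) : ℂ :=
  Matrix.det (Matrix.of fun j k : Fin n => fCoeff h ((j : ℤ) - (k : ℤ)))

/-- `P` is the monic orthogonal polynomial `Φ_k` of degree `k` for the weight `f`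
on the unit circle. -/
def IsMonicOPUC (f : ℝ → ℂ) (k : ℕ) (P : Polynomial ℂ) : Prop :=
  P.Monic ∧ P.degree = k ∧
  ∀ j : ℕ, j < k →
    (1 / (2 * (Real.pi : ℂ))) * (∫ θ in (0:ℝ)..(2 * Real.pi),
        P.eval (Complex.exp (Complex.I * θ)) * Complex.exp (-Complex.I * j * θ) * f θ) = 0

/-- `Q` is the monic reversed orthogonal polynomial `Φ̂_k` of degree `k` for the
weight `f` on the unit circle. -/
def IsMonicOPUCRev (f : ℝ → ℂ) (k : ℕ) (Q : Polynomial ℂ) : Prop :=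
  Q.Monic ∧ Q.degree = k ∧
  ∀ j : ℕ, j < k →
    (1 / (2 * (Real.pi : ℂ))) * (∫ θ in (0:ℝ)..(2 * Real.pi),
        Q.eval (Complex.exp (-Complex.I * θ)) * Complex.exp (Complex.I * j * θ) * f θ) = 0

/-!
Write `c_k` for the Fourier coefficients of `f`. Stack the moment rows `(c_{j-q})_{q < n+ℓ}`,
`j < n`, on top of the unit rows `e_r`, `r < ℓ`, to get a square matrix `K`. Rotating its columns
by `ℓ` (a permutation of sign `(-1)^{ℓn}`) makes `K` block upper triangular with diagonal blocks
`T_n(z^ℓ f)` and `1`, so `D_n(z^ℓ f) = (-1)^{ℓn} det K`. Now multiply `K` on the right by the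
unitriangular matrix whose columns are the coefficient vectors of `1, z, …, z^{n-1}, Φ_n, …,
Φ_{n+ℓ-1}`. Orthogonality kills the moment rows against the `Φ` columns, so the product is block
lower triangular with diagonal blocks `T_n(f)` and `(Φ_{n+s}^{(r)}(0) / r!)_{r,s}`.
-/

open Polynomial Matrix Equiv
open scoped Nat

theorem coe_finRotate_pow {N : ℕ} (k : ℕ) (q : Fin N) :
    ((finRotate N ^ k) q : ℕ) = (q + k) % N := by
  cases N with
  | zero => exact q.elim0
  | succ N =>
    induction k with
    | zero => simp [Nat.mod_eq_of_lt q.isLt]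
    | succ k ih =>
      rw [pow_succ', Perm.mul_apply, finRotate_apply, Fin.val_add, ih, Fin.val_one',
        Nat.mod_add_mod, Nat.add_mod_mod, add_assoc]

theorem coe_finRotate_pow_castAdd {n ℓ : ℕ} (k : Fin n) :
    ((finRotate (n + ℓ) ^ ℓ) (Fin.castAdd ℓ k) : ℕ) = k + ℓ := by
  rw [coe_finRotate_pow, Fin.val_castAdd, Nat.mod_eq_of_lt (by omega)]

theorem coe_finRotate_pow_natAdd {n ℓ : ℕ} (r : Fin ℓ) :
    ((finRotate (n + ℓ) ^ ℓ) (Fin.natAdd n r) : ℕ) = r := by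
  rw [coe_finRotate_pow, Fin.val_natAdd, add_right_comm, Nat.add_mod_left,
    Nat.mod_eq_of_lt (by omega)]

theorem sign_finRotate_pow (n ℓ : ℕ) :
    Perm.sign (finRotate (n + ℓ) ^ ℓ) = (-1) ^ (ℓ * n) := by
  rw [map_pow, sign_finRotate, ← pow_mul]
  cases ℓ with
  | zero => simp
  | succ m =>
    rw [show (n + (m + 1) - 1) * (m + 1) = (m + 1) * n + m * (m + 1) by
      rw [Nat.add_succ_sub_one]; ring, pow_add, (Nat.even_mul_succ_self m).neg_one_pow, mul_one]

section Algebra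

variable {R : Type*} [CommRing R]

def coeffMatrix {N : ℕ} (P : Fin N → R[X]) : Matrix (Fin N) (Fin N) R :=
  of fun i j => (P j).coeff i

theorem det_coeffMatrix_eq_one {N : ℕ} {P : Fin N → R[X]} (hdeg : ∀ j, (P j).natDegree ≤ j)
    (hlead : ∀ j, (P j).coeff j = 1) : (coeffMatrix P).det = 1 := by
  rw [det_of_isUpperTriangular (M := coeffMatrix P) fun i j (hji : j < i) =>
    coeff_eq_zero_of_natDegree_lt ((hdeg j).trans_lt hji)]
  exact Finset.prod_eq_one fun j _ => hlead j

theorem det_iterate_derivative_eval_zero {N : ℕ} (P : Fin N → R[X]) :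
    (of fun i j : Fin N => (derivative^[i] (P j)).eval 0).det =
      (∏ i : Fin N, ((i : ℕ)! : R)) * (coeffMatrix P).det := by
  rw [← det_mul_column]
  congr 1
  ext i j
  simp [coeffMatrix, ← coeff_zero_eq_eval_zero, coeff_iterate_derivative, nsmul_eq_mul,
    Nat.descFactorial_self]

def toeplitz (c : ℤ → R) (n : ℕ) : Matrix (Fin n) (Fin n) R :=
  of fun j k => c (j - k)

def momentMatrix (c : ℤ → R) (n ℓ : ℕ) : Matrix (Fin (n + ℓ)) (Fin (n + ℓ)) R :=
  of <| Fin.append (fun (j : Fin n) (q : Fin (n + ℓ)) => c (j - q))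
    fun (r : Fin ℓ) q => if (q : ℕ) = r then 1 else 0

theorem det_toeplitz_shift_eq_det_momentMatrix (c : ℤ → R) (n ℓ : ℕ) :
    (toeplitz (fun m => c (m - ℓ)) n).det = (-1) ^ (ℓ * n) * (momentMatrix c n ℓ).det := by
  have hblocks : ((momentMatrix c n ℓ).submatrix id (finRotate (n + ℓ) ^ ℓ)).submatrix
      finSumFinEquiv finSumFinEquiv =
      fromBlocks (toeplitz (fun m => c (m - ℓ)) n) (of fun (j : Fin n) (r : Fin ℓ) => c (j - r))
        0 1 := by
    ext (j | r) (k | s) <;>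
      simp only [momentMatrix, toeplitz, submatrix_apply, finSumFinEquiv_apply_left,
        finSumFinEquiv_apply_right, id_eq, of_apply, Fin.append_left, Fin.append_right,
        coe_finRotate_pow_castAdd, coe_finRotate_pow_natAdd, fromBlocks_apply₁₁,
        fromBlocks_apply₁₂, fromBlocks_apply₂₁, fromBlocks_apply₂₂, Matrix.zero_apply, one_apply,
        Fin.ext_iff]
    · push_cast
      rw [sub_add_eq_sub_sub]
    · exact if_neg (by omega)
    · simp only [eq_comm]
  have hdet := congrArg det hblocks
  rw [det_submatrix_equiv_self, det_permute', sign_finRotate_pow, det_fromBlocks_zero₂₁, det_one,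
    mul_one] at hdet
  simp [← hdet]

theorem momentMatrix_mul_coeffMatrix_castAdd (c : ℤ → R) {n ℓ : ℕ} (P : Fin (n + ℓ) → R[X])
    (j : Fin n) (y : Fin (n + ℓ)) (hy : (P y).natDegree < n + ℓ) :
    (momentMatrix c n ℓ * coeffMatrix P) (Fin.castAdd ℓ j) y =
      (P y).sum fun q a => c (j - q) * a := by
  rw [sum_over_range' _ (fun _ => mul_zero _) _ hy, ← Fin.sum_univ_eq_sum_range]
  simp [mul_apply, momentMatrix, coeffMatrix]

theorem momentMatrix_mul_coeffMatrix_natAdd (c : ℤ → R) {n ℓ : ℕ} (P : Fin (n + ℓ) → R[X])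
    (r : Fin ℓ) (y : Fin (n + ℓ)) :
    (momentMatrix c n ℓ * coeffMatrix P) (Fin.natAdd n r) y = (P y).coeff r := by
  simp only [mul_apply, momentMatrix, coeffMatrix, of_apply, Fin.append_right, ite_mul, one_mul,
    zero_mul]
  rw [Fin.sum_univ_eq_sum_range (fun q => if q = (r : ℕ) then (P y).coeff q else 0),
    Finset.sum_ite_eq', if_pos (Finset.mem_range.2 (by omega))]

theorem det_toeplitz_shift_of_orthogonal (c : ℤ → R) {n ℓ : ℕ} (Q : Fin ℓ → R[X])
    (hmonic : ∀ s, (Q s).Monic)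
    (hdeg : ∀ s, (Q s).natDegree = n + s)
    (horth : ∀ s (j : Fin n), (Q s).sum (fun q a => c (j - q) * a) = 0) :
    (toeplitz (fun m => c (m - ℓ)) n).det =
      (-1) ^ (ℓ * n) * (toeplitz c n).det * (coeffMatrix Q).det := by
  set P := Fin.append (fun k : Fin n => (X : R[X]) ^ (k : ℕ)) Q
  have hPdeg : ∀ y, (P y).natDegree ≤ y := by
    refine Fin.addCases (fun k => ?_) fun s => ?_
    · simpa [P] using natDegree_X_pow_le (R := R) k
    · simp [P, hdeg]
  have hPlead : ∀ y, (P y).coeff y = 1 := by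
    refine Fin.addCases (fun k => ?_) fun s => ?_
    · simp [P]
    · simpa [P, hdeg] using (hmonic s).coeff_natDegree
  have hblocks : (momentMatrix c n ℓ * coeffMatrix P).submatrix finSumFinEquiv finSumFinEquiv =
      fromBlocks (toeplitz c n) 0 (of fun (r : Fin ℓ) (k : Fin n) => ((X : R[X]) ^ (k : ℕ)).coeff r)
        (coeffMatrix Q) := by
    have hPlt : ∀ y, (P y).natDegree < n + ℓ := fun y => (hPdeg y).trans_lt y.isLt
    ext (j | r) (k | s) <;>
      simp only [submatrix_apply, finSumFinEquiv_apply_left, finSumFinEquiv_apply_right,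
        fromBlocks_apply₁₁, fromBlocks_apply₁₂, fromBlocks_apply₂₁, fromBlocks_apply₂₂,
        momentMatrix_mul_coeffMatrix_castAdd c P _ _ (hPlt _),
        momentMatrix_mul_coeffMatrix_natAdd, P, Fin.append_left, Fin.append_right]
    · simp [X_pow_eq_monomial, sum_monomial_index, toeplitz]
    · exact horth s j
    · rfl
    · rfl
  calc (toeplitz (fun m => c (m - ℓ)) n).det
      = (-1) ^ (ℓ * n) * (momentMatrix c n ℓ * coeffMatrix P).det := by
        rw [det_toeplitz_shift_eq_det_momentMatrix, det_mul, det_coeffMatrix_eq_one hPdeg hPlead,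
          mul_one]
    _ = (-1) ^ (ℓ * n) * (toeplitz c n).det * (coeffMatrix Q).det := by
        rw [← det_submatrix_equiv_self finSumFinEquiv, hblocks, det_fromBlocks_zero₁₂, mul_assoc]

end Algebra

theorem fCoeff_exp_mul (f : ℝ → ℂ) (ℓ : ℕ) (m : ℤ) :
    fCoeff (fun θ => Complex.exp (I * ℓ * θ) * f θ) m = fCoeff f (m - ℓ) := by
  unfold fCoeff
  congr 1
  refine intervalIntegral.integral_congr fun θ _ => ?_
  dsimp only
  rw [mul_comm (Complex.exp _) (f θ), mul_assoc, ← Complex.exp_add]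
  push_cast
  ring_nf

theorem toeplitzDet_eq_det_toeplitz (h : ℝ → ℂ) (n : ℕ) :
    toeplitzDet h n = (toeplitz (fCoeff h) n).det :=
  rfl

theorem toeplitzDet_exp_mul (f : ℝ → ℂ) (ℓ n : ℕ) :
    toeplitzDet (fun θ => Complex.exp (I * ℓ * θ) * f θ) n =
      (toeplitz (fun m => fCoeff f (m - ℓ)) n).det := by
  simp only [toeplitzDet_eq_det_toeplitz, toeplitz, fCoeff_exp_mul]

theorem integral_eval_exp_mul_eq_sum_fCoeff {f : ℝ → ℂ}
    (hf : IntervalIntegrable f MeasureTheory.volume 0 (2 * π)) (P : ℂ[X]) (j : ℕ) :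
    (1 / (2 * (π : ℂ))) * (∫ θ in (0 : ℝ)..(2 * π),
        P.eval (Complex.exp (I * θ)) * Complex.exp (-I * j * θ) * f θ) =
      P.sum fun q a => fCoeff f (j - q) * a := by
  have hterm : ∀ θ : ℝ, P.eval (Complex.exp (I * θ)) * Complex.exp (-I * j * θ) * f θ =
      ∑ q ∈ P.support, P.coeff q * (f θ * Complex.exp (-I * ((j - q : ℤ) : ℂ) * θ)) := fun θ => by
    rw [eval_eq_sum, Polynomial.sum_def, Finset.sum_mul, Finset.sum_mul]
    refine Finset.sum_congr rfl fun q _ => ?_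
    rw [← Complex.exp_nat_mul, mul_assoc, mul_assoc, mul_comm, ← mul_assoc, ← mul_assoc,
      ← Complex.exp_add]
    push_cast
    ring_nf
  have hint : ∀ q ∈ P.support, IntervalIntegrable
      (fun θ : ℝ => P.coeff q * (f θ * Complex.exp (-I * ((j - q : ℤ) : ℂ) * θ)))
      MeasureTheory.volume 0 (2 * π) := fun q _ =>
    (hf.mul_continuousOn (by fun_prop)).const_mul _
  simp_rw [hterm, intervalIntegral.integral_finsetSum hint, intervalIntegral.integral_const_mul,
    Finset.mul_sum, Polynomial.sum_def, fCoeff]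
  refine Finset.sum_congr rfl fun q _ => ?_
  ring

theorem IsMonicOPUC.sum_fCoeff_eq_zero {f : ℝ → ℂ}
    (hf : IntervalIntegrable f MeasureTheory.volume 0 (2 * π)) {k : ℕ} {P : ℂ[X]}
    (hP : IsMonicOPUC f k P) {j : ℕ} (hj : j < k) :
    (P.sum fun q a => fCoeff f (j - q) * a) = 0 := by
  rw [← integral_eval_exp_mul_eq_sum_fCoeff hf, hP.2.2 j hj]

theorem toeplitz_det_shift_up_general
    (f : ℝ → ℂ) (hf : IntervalIntegrable f MeasureTheory.volume 0 (2 * Real.pi))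
    (n ℓ : ℕ)
    (Φ : ℕ → Polynomial ℂ)
    (hΦ : ∀ j : ℕ, n ≤ j → j ≤ n + ℓ - 1 → IsMonicOPUC f j (Φ j)) :
    toeplitzDet (fun θ => Complex.exp (Complex.I * ℓ * θ) * f θ) n =
      ((-1 : ℂ) ^ (ℓ * n) / ∏ j ∈ Finset.range (ℓ - 1), ((Nat.factorial (j + 1) : ℂ))) *
        Matrix.det (Matrix.of fun i j : Fin ℓ =>
          ((fun p : Polynomial ℂ => Polynomial.derivative p)^[(i : ℕ)] (Φ (n + (j : ℕ)))).eval 0) *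
        toeplitzDet f n := by
  have hΦ' : ∀ s : Fin ℓ, IsMonicOPUC f (n + s) (Φ (n + s)) := fun s => hΦ _ (by omega) (by omega)
  have hfact : ∏ i : Fin ℓ, ((i : ℕ)! : ℂ) = ∏ j ∈ Finset.range (ℓ - 1), ((j + 1)! : ℂ) := by
    rw [Fin.prod_univ_eq_prod_range (fun i => (i ! : ℂ))]
    cases ℓ with
    | zero => rfl
    | succ m => simp [Finset.prod_range_succ']
  have hfact_ne : ∏ j ∈ Finset.range (ℓ - 1), ((j + 1)! : ℂ) ≠ 0 :=
    Finset.prod_ne_zero_iff.2 fun j _ => Nat.cast_ne_zero.2 (Nat.factorial_ne_zero _)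
  rw [toeplitzDet_exp_mul, toeplitzDet_eq_det_toeplitz,
    det_toeplitz_shift_of_orthogonal (fCoeff f) (fun s : Fin ℓ => Φ (n + s))
      (fun s => (hΦ' s).1) (fun s => natDegree_eq_of_degree_eq_some (hΦ' s).2.1)
      (fun s j => (hΦ' s).sum_fCoeff_eq_zero hf (by omega)),
    det_iterate_derivative_eval_zero, hfact]
  field_simp

/-- The relation (13) between `D_n(z^ℓ f(z))` and `D_n(f(z))`. -/
theorem toeplitz_det_shift_up
    (f : ℝ → ℂ) (hf : IntervalIntegrable f MeasureTheory.volume 0 (2 * Real.pi))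
    (n ℓ : ℕ) (hn : 1 ≤ n) (hℓ : 1 ≤ ℓ)
    (hD : ∀ j : ℕ, n ≤ j → j ≤ n + ℓ - 1 → toeplitzDet f j ≠ 0)
    (Φ : ℕ → Polynomial ℂ)
    (hΦ : ∀ j : ℕ, n ≤ j → j ≤ n + ℓ - 1 → IsMonicOPUC f j (Φ j)) :
    toeplitzDet (fun θ => Complex.exp (Complex.I * ℓ * θ) * f θ) n =
      ((-1 : ℂ) ^ (ℓ * n) / ∏ j ∈ Finset.range (ℓ - 1), ((Nat.factorial (j + 1) : ℂ))) *
        Matrix.det (Matrix.of fun i j : Fin ℓ =>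
          ((fun p : Polynomial ℂ => Polynomial.derivative p)^[(i : ℕ)] (Φ (n + (j : ℕ)))).eval 0) *
        toeplitzDet f n :=
  toeplitz_det_shift_up_general f hf n ℓ Φ hΦ
end
end

section
/- Let f be an integrable complex-valued function on the unit circle, let n ≥ 1, and suppose D_n(f) ≠ 0, so that the monic reversed orthogonal polynomial Φ̂_n with respect to f exists. Then D_n(z^{−1} f(z)) = (−1)^n Φ̂_n(0) D_n(f). -/
open Complex Real Filter Finset

noncomputable section

/-! Write `c_k` for the Fourier coefficients of `f`. The Toeplitz matrix of `e^{-iθ} f` has rows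
`(c_{j+1-k})_k` for `j = 0, …, n-1`, i.e. rows `1, …, n` of the `(n+1) × n` matrix `(c_{j-k})`,
whose rows `0, …, n-1` form the Toeplitz matrix of `f`. Orthogonality of `Φ̂_n = ∑ q_m z^m` says
exactly that `∑ q_m · (row m) = 0`, and `q_n = 1`, so row `n` is `-∑_{m<n} q_m · (row m)`.
Expanding by multilinearity, only the `m = 0` term survives, and moving row `0` from the bottom
to the top costs the sign `(-1)^(n-1)`. -/

theorem Matrix.det_submatrix_succ_of_sum_smul_eq_zero {R : Type*} [CommRing R] {n : ℕ}
    (A : Matrix (Fin (n + 1)) (Fin n) R) (q : Fin (n + 1) → R) (hq : q (Fin.last n) = 1)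
    (h : ∑ i, q i • A i = 0) :
    (A.submatrix Fin.succ id).det = (-1) ^ n * q 0 * (A.submatrix Fin.castSucc id).det := by
  cases n with
  | zero => simp [show q 0 = 1 from hq]
  | succ N =>
    set B := A.submatrix Fin.castSucc id
    have hlast : A (Fin.last (N + 1)) = ∑ i, (-q i.castSucc) • B i := by
      rw [Fin.sum_univ_castSucc, hq, one_smul, add_eq_zero_iff_eq_neg'] at h
      simp only [h, neg_smul, sum_neg_distrib]
      rfl
    have hrotate : A.submatrix Fin.succ id =
        (B.updateRow 0 (A (Fin.last (N + 1)))).submatrix (finRotate (N + 1)) id := by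
      ext i k
      induction i using Fin.lastCases with
      | last => simp
      | cast i => simp [B]
    rw [hrotate, Matrix.det_permute, sign_finRotate, hlast, Matrix.det_updateRow_sum]
    simp only [Fin.castSucc_zero, smul_eq_mul]
    push_cast
    ring

lemma fCoeff_exp_neg_mul (f : ℝ → ℂ) (k : ℤ) :
    fCoeff (fun θ => exp (-I * θ) * f θ) k = fCoeff f (k + 1) := by
  unfold fCoeff
  congr 1
  refine intervalIntegral.integral_congr fun θ _ => ?_
  simp only [Int.cast_add, Int.cast_one, add_mul, mul_add, Complex.exp_add]
  ring_nf

lemma exp_neg_pow_mul_exp (θ : ℝ) (m j : ℕ) :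
    exp (-I * θ) ^ m * exp (I * j * θ) = exp (-I * ((m - j : ℤ) : ℂ) * θ) := by
  rw [← Complex.exp_nat_mul, ← Complex.exp_add]
  push_cast
  ring_nf

lemma integral_eval_exp_neg_mul_eq_sum_fCoeff (f : ℝ → ℂ)
    (hf : IntervalIntegrable f MeasureTheory.volume 0 (2 * π)) (Q : Polynomial ℂ) {N : ℕ}
    (hQ : Q.natDegree < N) (j : ℕ) :
    (1 / (2 * (π : ℂ))) * (∫ θ in (0:ℝ)..(2 * π),
        Q.eval (exp (-I * θ)) * exp (I * j * θ) * f θ) =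
      ∑ m ∈ range N, Q.coeff m * fCoeff f (m - j) := by
  have hexpand : ∀ θ : ℝ, Q.eval (exp (-I * θ)) * exp (I * j * θ) * f θ =
      ∑ m ∈ range N, Q.coeff m * (f θ * exp (-I * ((m - j : ℤ) : ℂ) * θ)) := fun θ => by
    simp only [Polynomial.eval_eq_sum_range' hQ, sum_mul, ← exp_neg_pow_mul_exp]
    exact sum_congr rfl fun m _ => by ring
  have hint : ∀ m : ℤ, IntervalIntegrable (fun θ : ℝ => f θ * exp (-I * m * θ))
      MeasureTheory.volume 0 (2 * π) := fun m =>
    hf.mul_continuousOn (by fun_prop)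
  simp only [hexpand, fCoeff]
  rw [intervalIntegral.integral_finsetSum fun m _ => (hint _).const_mul _]
  simp only [intervalIntegral.integral_const_mul, mul_sum]
  exact sum_congr rfl fun m _ => mul_left_comm _ _ _

def fourierMatrix (f : ℝ → ℂ) (m n : ℕ) : Matrix (Fin m) (Fin n) ℂ :=
  Matrix.of fun j k => fCoeff f ((j : ℤ) - (k : ℤ))

lemma toeplitzDet_eq_det_submatrix_castSucc (f : ℝ → ℂ) (n : ℕ) :
    toeplitzDet f n = ((fourierMatrix f (n + 1) n).submatrix Fin.castSucc id).det :=
  rfl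

lemma toeplitzDet_exp_neg_mul (f : ℝ → ℂ) (n : ℕ) :
    toeplitzDet (fun θ => exp (-I * θ) * f θ) n =
      ((fourierMatrix f (n + 1) n).submatrix Fin.succ id).det := by
  unfold toeplitzDet fourierMatrix
  congr 1
  ext j k
  simp only [Matrix.of_apply, Matrix.submatrix_apply, fCoeff_exp_neg_mul, Fin.val_succ, id]
  push_cast
  ring_nf

lemma IsMonicOPUCRev.sum_coeff_smul_fourierMatrix_eq_zero {f : ℝ → ℂ}
    (hf : IntervalIntegrable f MeasureTheory.volume 0 (2 * π)) {n : ℕ} {Q : Polynomial ℂ}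
    (hQ : IsMonicOPUCRev f n Q) :
    ∑ m : Fin (n + 1), Q.coeff m • fourierMatrix f (n + 1) n m = 0 := by
  obtain ⟨-, hdeg, horth⟩ := hQ
  have hlt : Q.natDegree < n + 1 :=
    (Polynomial.natDegree_eq_of_degree_eq_some hdeg).trans_lt n.lt_succ_self
  ext k
  simp only [Finset.sum_apply, Pi.smul_apply, smul_eq_mul, fourierMatrix, Matrix.of_apply,
    Pi.zero_apply]
  rw [Fin.sum_univ_eq_sum_range (fun m => Q.coeff m * fCoeff f (m - k)),
    ← integral_eval_exp_neg_mul_eq_sum_fCoeff f hf Q hlt k]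
  exact horth k k.isLt

theorem toeplitz_det_shift_down_general
    (f : ℝ → ℂ) (hf : IntervalIntegrable f MeasureTheory.volume 0 (2 * Real.pi))
    (n : ℕ)
    (Q : Polynomial ℂ) (hQ : IsMonicOPUCRev f n Q) :
    toeplitzDet (fun θ => Complex.exp (-Complex.I * θ) * f θ) n =
      (-1 : ℂ) ^ n * Q.eval 0 * toeplitzDet f n := by
  have hlead : Q.coeff n = 1 := by
    rw [← Polynomial.natDegree_eq_of_degree_eq_some hQ.2.1]
    exact hQ.1.coeff_natDegree
  rw [toeplitzDet_exp_neg_mul, toeplitzDet_eq_det_submatrix_castSucc,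
    ← Polynomial.coeff_zero_eq_eval_zero]
  exact Matrix.det_submatrix_succ_of_sum_smul_eq_zero _ (fun m => Q.coeff m) hlead
    (hQ.sum_coeff_smul_fourierMatrix_eq_zero hf)

/-- The relation (24): `D_n(z⁻¹ f(z)) = (-1)ⁿ Φ̂_n(0) D_n(f)`. -/
theorem toeplitz_det_shift_down
    (f : ℝ → ℂ) (hf : IntervalIntegrable f MeasureTheory.volume 0 (2 * Real.pi))
    (n : ℕ) (hn : 1 ≤ n)
    (hD : toeplitzDet f n ≠ 0)
    (Q : Polynomial ℂ) (hQ : IsMonicOPUCRev f n Q) :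
    toeplitzDet (fun θ => Complex.exp (-Complex.I * θ) * f θ) n =
      (-1 : ℂ) ^ n * Q.eval 0 * toeplitzDet f n :=
  toeplitz_det_shift_down_general f hf n Q hQ
end
end

section
/- Let f be a Fisher–Hartwig symbol with Re α_j > −1/2 and Re β_j ∈ (−1/2, 1/2] for all j, fix 0 ≤ j_0 ≤ m, and let f^+ (resp. f^−) be the Fisher–Hartwig symbol obtained from f by replacing β_{j_0} with β_{j_0} + 1 (resp. β_{j_0} − 1). If D_n(f) ≠ 0, so that the monic orthogonal polynomials Φ_n and Φ̂_n for the weight f exist, then D_n(f^+) = z_{j_0}^{−n} Φ_n(0) D_n(f) and D_n(f^−) = z_{j_0}^{n} Φ̂_n(0) D_n(f). -/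
open Complex Real Filter Finset

noncomputable section

/-- Barnes' G-function: `barnesG1 z = G(1+z)`. -/
def barnesG1 (z : ℂ) : ℂ :=
  (2 * (Real.pi : ℂ)) ^ (z / 2) *
    Complex.exp (-(z + (1 + (Real.eulerMascheroniConstant : ℂ)) * z ^ 2) / 2) *
    ∏' k : ℕ, (1 + z / ((k : ℂ) + 1)) ^ (k + 1) *
      Complex.exp (z ^ 2 / (2 * ((k : ℂ) + 1)) - z)

/-- The jump factor `g_{z_j,β_j}`, as a function of the angle. -/
def fhJump (t : ℝ) (b : ℂ) (θ : ℝ) : ℂ :=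
  if θ < t then Complex.exp (Real.pi * Complex.I * b)
  else Complex.exp (-(Real.pi * Complex.I * b))

/-- The Fisher–Hartwig symbol, as a function of the angle `θ ∈ [0,2π)`. -/
def fhSymbol (m : ℕ) (θs : Fin (m+1) → ℝ) (α β : Fin (m+1) → ℂ) (Vc : ℂ → ℂ) : ℝ → ℂ :=
  fun θ =>
    Complex.exp (Vc (Complex.exp (Complex.I * θ))) *
    Complex.exp (Complex.I * θ * ∑ j, β j) *
    ∏ j, (((‖Complex.exp (Complex.I * θ) - Complex.exp (Complex.I * θs j)‖ : ℝ) : ℂ) ^ (2 * α j) *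
      fhJump (θs j) (β j) θ * Complex.exp (-(Complex.I * (θs j : ℂ) * β j)))

/-- Fourier coefficients `V_k` of `V`. -/
def vCoeff (Vc : ℂ → ℂ) (k : ℤ) : ℂ :=
  fCoeff (fun θ => Vc (Complex.exp (Complex.I * θ))) k

/-- `log b_+(z) = Σ_{k≥1} V_k z^k`. -/
def bplusLog (Vc : ℂ → ℂ) (z : ℂ) : ℂ := ∑' k : ℕ, vCoeff Vc ((k : ℤ) + 1) * z ^ (k + 1)

/-- `log b_-(z) = Σ_{k≤-1} V_k z^k`. -/
def bminusLog (Vc : ℂ → ℂ) (z : ℂ) : ℂ :=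
  ∑' k : ℕ, vCoeff Vc (-((k : ℤ) + 1)) * z ^ (-((k : ℤ) + 1))

/-- The strong Szegő main term `exp(n V_0 + Σ_{k≥1} k V_k V_{-k})`. -/
def szegoMain (Vc : ℂ → ℂ) (n : ℕ) : ℂ :=
  Complex.exp ((n : ℂ) * vCoeff Vc 0 +
    ∑' k : ℕ, ((k : ℂ) + 1) * vCoeff Vc ((k : ℤ) + 1) * vCoeff Vc (-((k : ℤ) + 1)))

/-- The main term in the Fisher–Hartwig asymptotics of `D_n(f)`, with jump
parameters `b` (in place of `β`). -/
def fhMain (m : ℕ) (θs : Fin (m+1) → ℝ) (α b : Fin (m+1) → ℂ) (Vc : ℂ → ℂ) (n : ℕ) : ℂ :=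
  szegoMain Vc n *
  (∏ j, Complex.exp ((-(α j) + b j) * bplusLog Vc (Complex.exp (Complex.I * θs j)) +
      (-(α j) - b j) * bminusLog Vc (Complex.exp (Complex.I * θs j)))) *
  (n : ℂ) ^ (∑ j, (α j ^ 2 - b j ^ 2)) *
  (∏ j, ∏ k ∈ Finset.Ioi j,
    (((‖Complex.exp (Complex.I * θs j) - Complex.exp (Complex.I * θs k)‖ : ℝ) : ℂ) ^
        (2 * (b j * b k - α j * α k)) *
      Complex.exp (Complex.I * ((θs k : ℂ) - (θs j : ℂ) - (Real.pi : ℂ)) * (α j * b k - α k * b j)))) *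
  ∏ j, barnesG1 (α j + b j) * barnesG1 (α j - b j) / barnesG1 (2 * α j)

/-! Shifting `β_{j₀}` by an integer `k` multiplies the symbol by the constant
`(-1)^k z_{j₀}^{-k}` and by `e^{ikθ}`, and the latter shifts all Fourier coefficients by `k`.
Hence `D_n(f^±)` is `(-z_{j₀}^{∓1})^n` times the determinant of the Toeplitz matrix of `f` moved
by one diagonal. The orthogonality relations of `Φ_n` (resp. `Φ̂_n`) say that the Fourier
coefficients of `f` satisfy a linear recurrence with coefficients those of the polynomial; it
expresses the one new column (row) through the old ones, and only the term `Φ_n(0)` survives,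
with the sign of a cyclic permutation of the columns. -/

open MeasureTheory

theorem det_toeplitz_sub_one_of_recurrence {R : Type*} [CommRing R] (n : ℕ) (φ : ℤ → R)
    (c : ℕ → R) (hc : c n = 1)
    (hrec : ∀ j : Fin n, ∑ l ∈ Finset.range (n + 1), c l * φ (j - l) = 0) :
    Matrix.det (Matrix.of fun j k : Fin n => φ (j - k - 1)) =
      (-1) ^ n * c 0 * Matrix.det (Matrix.of fun j k : Fin n => φ (j - k)) := by
  cases n with
  | zero => simp [hc]
  | succ m =>
    set T := Matrix.of fun j k : Fin (m + 1) => φ (j - k)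
    -- The columns of the shifted matrix are columns `1, …, m` of `T`, followed by the column
    -- `φ (j - (m + 1))`, which the recurrence expresses through the columns of `T`;
    -- in the determinant only the multiple of column `0` survives.
    set A := T.submatrix id (finRotate (m + 1))
    have hlast : ∀ j : Fin (m + 1),
        φ (j - (m + 1)) = ∑ i, (-c (finRotate (m + 1) i)) • A j i := by
      intro j
      have h := hrec j
      rw [Finset.sum_range_succ, hc, one_mul, Finset.sum_range] at h
      rw [← Equiv.sum_comp (finRotate (m + 1)).symm]
      simp only [A, T, Matrix.submatrix_apply, Matrix.of_apply, id_eq, Equiv.apply_symm_apply,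
        smul_eq_mul, neg_mul, Finset.sum_neg_distrib]
      push_cast at h ⊢
      linear_combination h
    have hshift : (Matrix.of fun j k : Fin (m + 1) => φ (j - k - 1)) =
        A.updateCol (Fin.last m) fun j => ∑ i, (-c (finRotate (m + 1) i)) • A j i := by
      ext j k
      rcases Fin.eq_castSucc_or_eq_last k with ⟨k, rfl⟩ | rfl
      · rw [Matrix.updateCol_ne (Fin.castSucc_ne_last k)]
        have hk : ((finRotate (m + 1) k.castSucc : Fin (m + 1)) : ℕ) = k + 1 :=
          finRotate_of_lt k.isLt ▸ rfl
        simp only [A, T, Matrix.submatrix_apply, Matrix.of_apply, id_eq, hk, Fin.val_castSucc]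
        push_cast
        ring_nf
      · rw [Matrix.updateCol_self, ← hlast]
        simp only [Matrix.of_apply, Fin.val_last]
        ring_nf
    have hA : A.det = (-1) ^ m * T.det := by
      rw [Matrix.det_permute', sign_finRotate]
      push_cast
      simp
    rw [hshift, Matrix.det_updateCol_sum, finRotate_last, hA, smul_eq_mul, Fin.val_zero]
    ring

theorem det_toeplitz_add_one_of_recurrence {R : Type*} [CommRing R] (n : ℕ) (φ : ℤ → R)
    (c : ℕ → R) (hc : c n = 1)
    (hrec : ∀ j : Fin n, ∑ l ∈ Finset.range (n + 1), c l * φ (l - j) = 0) :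
    Matrix.det (Matrix.of fun j k : Fin n => φ (j - k + 1)) =
      (-1) ^ n * c 0 * Matrix.det (Matrix.of fun j k : Fin n => φ (j - k)) := by
  have h := det_toeplitz_sub_one_of_recurrence n (fun k => φ (-k)) c hc
    (by simpa only [neg_sub] using hrec)
  rw [← Matrix.det_transpose, ← Matrix.det_transpose (Matrix.of _)]
  convert h using 3 <;> ext j k <;> simp only [Matrix.transpose_apply, Matrix.of_apply] <;>
    ring_nf

theorem fhJump_add_int (t : ℝ) (b : ℂ) (k : ℤ) (θ : ℝ) :
    fhJump t (b + k) θ = (-1) ^ k * fhJump t b θ := by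
  have hpos : cexp (π * I * k) = (-1) ^ k := by
    rw [mul_comm, Complex.exp_int_mul, Complex.exp_pi_mul_I]
  have hneg : cexp (-(π * I * k)) = (-1) ^ k := by
    rw [Complex.exp_neg, hpos, ← inv_zpow, inv_neg, inv_one]
  unfold fhJump
  split_ifs
  · rw [mul_add, Complex.exp_add, hpos, mul_comm]
  · rw [mul_add, neg_add, Complex.exp_add, hneg, mul_comm]

theorem fhSymbol_add_int (m : ℕ) (θs : Fin (m+1) → ℝ) (α β : Fin (m+1) → ℂ) (Vc : ℂ → ℂ)
    (ks : Fin (m+1) → ℤ) (θ : ℝ) :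
    fhSymbol m θs α (fun j => β j + ks j) Vc θ =
      (∏ j, (-1) ^ ks j * cexp (-(I * θs j * ks j))) *
        (cexp (I * (∑ j, ks j : ℤ) * θ) * fhSymbol m θs α β Vc θ) := by
  have hfactor : ∀ j, cexp (-(I * θs j * (β j + ks j))) =
      cexp (-(I * θs j * β j)) * cexp (-(I * θs j * ks j)) := by
    intro j
    rw [← Complex.exp_add]
    ring_nf
  have hlinear : cexp (I * θ * ∑ j, (β j + ks j)) =
      cexp (I * θ * ∑ j, β j) * cexp (I * (∑ j, ks j : ℤ) * θ) := by
    rw [← Complex.exp_add, Finset.sum_add_distrib]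
    push_cast
    ring_nf
  simp only [fhSymbol, fhJump_add_int, hfactor, hlinear, Finset.prod_mul_distrib]
  ring

theorem fhSymbol_update_add_int (m : ℕ) (θs : Fin (m+1) → ℝ) (α β : Fin (m+1) → ℂ)
    (Vc : ℂ → ℂ) (j₀ : Fin (m+1)) (k : ℤ) :
    fhSymbol m θs α (Function.update β j₀ (β j₀ + k)) Vc = fun θ : ℝ =>
      (-1) ^ k * cexp (-(I * θs j₀ * k)) * (cexp (I * k * θ) * fhSymbol m θs α β Vc θ) := by
  have hupd : Function.update β j₀ (β j₀ + k) =
      fun j => β j + ((Pi.single j₀ k : Fin (m+1) → ℤ) j : ℂ) := by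
    funext j
    rcases eq_or_ne j j₀ with rfl | hj <;> simp [*]
  funext θ
  rw [hupd, fhSymbol_add_int, Fintype.prod_eq_single j₀ fun j hj => by simp [hj],
    Finset.sum_pi_single']
  simp

theorem fCoeff_const_mul_exp_mul (c : ℂ) (s : ℤ) (h : ℝ → ℂ) (k : ℤ) :
    fCoeff (fun θ => c * (cexp (I * s * θ) * h θ)) k = c * fCoeff h (k - s) := by
  have hshift : ∀ θ : ℝ, c * (cexp (I * s * θ) * h θ) * cexp (-I * k * θ) =
      c * (h θ * cexp (-I * ↑(k - s) * θ)) := by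
    intro θ
    rw [mul_assoc, mul_assoc, mul_left_comm (cexp _), ← Complex.exp_add]
    push_cast
    ring_nf
  simp only [fCoeff, hshift, intervalIntegral.integral_const_mul]
  ring

theorem toeplitzDet_const_mul_exp_mul (c : ℂ) (s : ℤ) (h : ℝ → ℂ) (n : ℕ) :
    toeplitzDet (fun θ => c * (cexp (I * s * θ) * h θ)) n =
      c ^ n * Matrix.det (Matrix.of fun j k : Fin n => fCoeff h (j - k - s)) := by
  have hsmul := Matrix.det_smul (Matrix.of fun j k : Fin n => fCoeff h (j - k - s)) c
  rw [Fintype.card_fin] at hsmul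
  rw [toeplitzDet, ← hsmul]
  congr 1
  ext j k
  simp [fCoeff_const_mul_exp_mul]

theorem fCoeff_eq_zero_of_not_intervalIntegrable {f : ℝ → ℂ}
    (hf : ¬ IntervalIntegrable f volume 0 (2 * π)) (k : ℤ) : fCoeff f k = 0 := by
  have hcont : Continuous fun θ : ℝ => cexp (I * k * θ) := by fun_prop
  have hprod : ¬ IntervalIntegrable (fun θ : ℝ => f θ * cexp (-I * k * θ))
      volume 0 (2 * π) := by
    refine fun hi => hf ?_
    convert hi.mul_continuousOn hcont.continuousOn using 1
    funext θ
    rw [mul_assoc, ← Complex.exp_add]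
    ring_nf
    simp
  rw [fCoeff, intervalIntegral.integral_undef hprod, mul_zero]

theorem sum_coeff_mul_fCoeff_add_mul {f : ℝ → ℂ}
    (hf : IntervalIntegrable f volume 0 (2 * π)) {P : Polynomial ℂ} {N : ℕ}
    (hN : P.natDegree < N) (s k : ℤ) :
    ∑ l ∈ Finset.range N, P.coeff l * fCoeff f (k + s * l) =
      1 / (2 * (π : ℂ)) * ∫ θ in (0:ℝ)..(2 * π),
        P.eval (cexp (-(I * s * θ))) * cexp (-I * k * θ) * f θ := by
  set g : ℕ → ℝ → ℂ := fun l θ => P.coeff l * (f θ * cexp (-I * ↑(k + s * l) * θ))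
  have hg : ∀ l, IntervalIntegrable (g l) volume 0 (2 * π) :=
    fun l => (hf.mul_continuousOn (by fun_prop : Continuous _).continuousOn).const_mul _
  have hexp : ∀ (l : ℕ) (θ : ℝ),
      cexp (-I * ↑(k + s * l) * θ) = cexp (-(I * s * θ)) ^ l * cexp (-I * k * θ) := by
    intro l θ
    rw [← Complex.exp_nat_mul, ← Complex.exp_add]
    push_cast
    ring_nf
  calc ∑ l ∈ Finset.range N, P.coeff l * fCoeff f (k + s * l)
      = ∑ l ∈ Finset.range N, 1 / (2 * (π : ℂ)) * ∫ θ in (0:ℝ)..(2 * π), g l θ := by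
        simp only [g, fCoeff, intervalIntegral.integral_const_mul]
        exact Finset.sum_congr rfl fun l _ => by ring
    _ = 1 / (2 * (π : ℂ)) * ∫ θ in (0:ℝ)..(2 * π), ∑ l ∈ Finset.range N, g l θ := by
        rw [intervalIntegral.integral_finsetSum fun l _ => hg l, Finset.mul_sum]
    _ = _ := by
        congr 1
        refine intervalIntegral.integral_congr fun θ _ => ?_
        simp only [g, hexp, Polynomial.eval_eq_sum_range' hN, Finset.sum_mul]
        exact Finset.sum_congr rfl fun l _ => by ring

theorem sum_coeff_mul_fCoeff_add_mul_eq_zero {f : ℝ → ℂ} {P : Polynomial ℂ} {N : ℕ}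
    (hN : P.natDegree < N) (s k : ℤ)
    (horth : 1 / (2 * (π : ℂ)) * ∫ θ in (0:ℝ)..(2 * π),
      P.eval (cexp (-(I * s * θ))) * cexp (-I * k * θ) * f θ = 0) :
    ∑ l ∈ Finset.range N, P.coeff l * fCoeff f (k + s * l) = 0 := by
  by_cases hf : IntervalIntegrable f volume 0 (2 * π)
  · rw [sum_coeff_mul_fCoeff_add_mul hf hN, horth]
  · simp [fCoeff_eq_zero_of_not_intervalIntegrable hf]

theorem IsMonicOPUC.det_toeplitz_sub_one {f : ℝ → ℂ} {n : ℕ} {P : Polynomial ℂ}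
    (hP : IsMonicOPUC f n P) :
    Matrix.det (Matrix.of fun j k : Fin n => fCoeff f (j - k - 1)) =
      (-1) ^ n * P.eval 0 * toeplitzDet f n := by
  obtain ⟨hmonic, hdeg, horth⟩ := hP
  replace hdeg := Polynomial.natDegree_eq_of_degree_eq_some hdeg
  rw [toeplitzDet, ← Polynomial.coeff_zero_eq_eval_zero]
  refine det_toeplitz_sub_one_of_recurrence n (fCoeff f) P.coeff
    (hdeg ▸ hmonic.coeff_natDegree) fun j => ?_
  have h := sum_coeff_mul_fCoeff_add_mul_eq_zero (f := f) (P := P) (N := n + 1) (by omega)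
    (-1) j (by
      convert horth j j.isLt using 4
      push_cast
      ring_nf)
  simpa [← sub_eq_add_neg] using h

theorem IsMonicOPUCRev.det_toeplitz_add_one {f : ℝ → ℂ} {n : ℕ} {Q : Polynomial ℂ}
    (hQ : IsMonicOPUCRev f n Q) :
    Matrix.det (Matrix.of fun j k : Fin n => fCoeff f (j - k + 1)) =
      (-1) ^ n * Q.eval 0 * toeplitzDet f n := by
  obtain ⟨hmonic, hdeg, horth⟩ := hQ
  replace hdeg := Polynomial.natDegree_eq_of_degree_eq_some hdeg
  rw [toeplitzDet, ← Polynomial.coeff_zero_eq_eval_zero]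
  refine det_toeplitz_add_one_of_recurrence n (fCoeff f) Q.coeff
    (hdeg ▸ hmonic.coeff_natDegree) fun j => ?_
  have h := sum_coeff_mul_fCoeff_add_mul_eq_zero (f := f) (P := Q) (N := n + 1) (by omega)
    1 (-j) (by
      convert horth j j.isLt using 4
      push_cast
      ring_nf)
  simpa [neg_add_eq_sub] using h

theorem toeplitz_det_beta_shift_general
    (m : ℕ) (θs : Fin (m+1) → ℝ) (α β : Fin (m+1) → ℂ) (Vc : ℂ → ℂ)
    (j₀ : Fin (m+1)) (n : ℕ)
    (Φ Φhat : Polynomial ℂ)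
    (hΦ : IsMonicOPUC (fhSymbol m θs α β Vc) n Φ)
    (hΦhat : IsMonicOPUCRev (fhSymbol m θs α β Vc) n Φhat) :
    toeplitzDet (fhSymbol m θs α (Function.update β j₀ (β j₀ + 1)) Vc) n =
        (Complex.exp (Complex.I * θs j₀))⁻¹ ^ n * Φ.eval 0 *
          toeplitzDet (fhSymbol m θs α β Vc) n ∧
      toeplitzDet (fhSymbol m θs α (Function.update β j₀ (β j₀ - 1)) Vc) n =
        Complex.exp (Complex.I * θs j₀) ^ n * Φhat.eval 0 *
          toeplitzDet (fhSymbol m θs α β Vc) n := by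
  set D := toeplitzDet (fhSymbol m θs α β Vc) n
  have hsign : (-1 : ℂ) ^ n * (-1) ^ n = 1 := by rw [← mul_pow]; norm_num
  constructor
  · have hc : (-1 : ℂ) ^ (1 : ℤ) * cexp (-(I * θs j₀ * ((1 : ℤ) : ℂ))) =
        -(cexp (I * θs j₀))⁻¹ := by
      simp [Complex.exp_neg]
    rw [show β j₀ + 1 = β j₀ + ((1 : ℤ) : ℂ) by norm_num, fhSymbol_update_add_int,
      toeplitzDet_const_mul_exp_mul, hΦ.det_toeplitz_sub_one, hc, neg_pow]
    linear_combination ((cexp (I * θs j₀))⁻¹ ^ n * Φ.eval 0 * D) * hsign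
  · have hc : (-1 : ℂ) ^ (-1 : ℤ) * cexp (-(I * θs j₀ * ((-1 : ℤ) : ℂ))) =
        -cexp (I * θs j₀) := by
      norm_num
    rw [show β j₀ - 1 = β j₀ + ((-1 : ℤ) : ℂ) by push_cast; ring, fhSymbol_update_add_int,
      toeplitzDet_const_mul_exp_mul]
    simp_rw [sub_neg_eq_add]
    rw [hΦhat.det_toeplitz_add_one, hc, neg_pow]
    linear_combination (cexp (I * θs j₀) ^ n * Φhat.eval 0 * D) * hsign

/-- Exact identities for the Toeplitz determinants of the symbols `f^±` obtained
from a Fisher–Hartwig symbol `f` by shifting one jump parameter `β_{j₀}` by `±1`. -/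
theorem toeplitz_det_beta_shift
    (m : ℕ) (θs : Fin (m+1) → ℝ) (α β : Fin (m+1) → ℂ) (Vc : ℂ → ℂ)
    (hθ0 : θs 0 = 0) (hθmono : StrictMono θs) (hθlt : ∀ j, θs j < 2 * Real.pi)
    (hV : ∀ z : ℂ, ‖z‖ = 1 → AnalyticAt ℂ Vc z)
    (hα : ∀ j, -(1/2 : ℝ) < (α j).re)
    (hβ : ∀ j, -(1/2 : ℝ) < (β j).re ∧ (β j).re ≤ 1/2)
    (j₀ : Fin (m+1)) (n : ℕ)
    (hD : toeplitzDet (fhSymbol m θs α β Vc) n ≠ 0)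
    (Φ Φhat : Polynomial ℂ)
    (hΦ : IsMonicOPUC (fhSymbol m θs α β Vc) n Φ)
    (hΦhat : IsMonicOPUCRev (fhSymbol m θs α β Vc) n Φhat) :
    toeplitzDet (fhSymbol m θs α (Function.update β j₀ (β j₀ + 1)) Vc) n =
        (Complex.exp (Complex.I * θs j₀))⁻¹ ^ n * Φ.eval 0 *
          toeplitzDet (fhSymbol m θs α β Vc) n ∧
      toeplitzDet (fhSymbol m θs α (Function.update β j₀ (β j₀ - 1)) Vc) n =
        Complex.exp (Complex.I * θs j₀) ^ n * Φhat.eval 0 *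
          toeplitzDet (fhSymbol m θs α β Vc) n :=
  toeplitz_det_beta_shift_general m θs α β Vc j₀ n Φ Φhat hΦ hΦhat
end
end

section
/- Let m ≥ 0, q ∈ ℝ, and b_0,…,b_m ∈ ℝ satisfy −1/2 < b_j − q ≤ 1/2 for all j. Let k_0,…,k_m be integers with Σ_{j=0}^m k_j = 0 and not all k_j equal to zero. Then Σ_{j=0}^m (b_j + k_j)² > Σ_{j=0}^m b_j². In particular, the tuple (0,…,0) is the unique integer tuple with zero sum minimizing Σ_j (b_j + n_j)². -/
/-!
Write `c_j = b_j - q ∈ (-1/2, 1/2]`. Then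
`(b_j + k_j)² - b_j² = k_j (k_j + 2 c_j) + 2 q k_j`, and the last terms cancel in the sum
because `Σ k_j = 0`. For an integer `k` the product `k (k + 2c)` is nonnegative, and positive
when `k > 0` since `c > -1/2`; a nonzero integer tuple with zero sum has a positive entry.
-/

open Finset

theorem intCast_mul_add_two_mul_nonneg (k : ℤ) {c : ℝ} (hc₁ : -(1/2) ≤ c) (hc₂ : c ≤ 1/2) :
    0 ≤ (k : ℝ) * (k + 2 * c) := by
  rcases le_or_gt k 0 with hk | hk
  · have hk' : (k : ℝ) ≤ 0 := by exact_mod_cast hk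
    rcases hk.lt_or_eq with hk | rfl
    · have hk₁ : (k : ℝ) ≤ -1 := by exact_mod_cast Int.le_sub_one_of_lt hk
      nlinarith
    · simp
  · have hk₁ : (1 : ℝ) ≤ k := by exact_mod_cast hk
    nlinarith

theorem intCast_mul_add_two_mul_pos {k : ℤ} (hk : 0 < k) {c : ℝ} (hc : -(1/2) < c) :
    0 < (k : ℝ) * (k + 2 * c) := by
  have hk₁ : (1 : ℝ) ≤ k := by exact_mod_cast hk
  nlinarith

theorem sum_sq_lt_sum_add_intCast_sq {ι : Type*} [Fintype ι] {b : ι → ℝ} {q : ℝ}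
    (hb : ∀ j, -(1/2) < b j - q ∧ b j - q ≤ 1/2) {k : ι → ℤ} (hsum : ∑ j, k j = 0)
    (hk : k ≠ 0) :
    ∑ j, b j ^ 2 < ∑ j, (b j + k j) ^ 2 := by
  have hsumℝ : ∑ j, (k j : ℝ) = 0 := by exact_mod_cast hsum
  obtain ⟨j₀, -, hj₀⟩ := exists_pos_of_sum_zero_of_exists_nonzero k hsum
    (by simpa [funext_iff] using hk)
  have hexcess : 0 < ∑ j, (k j : ℝ) * (k j + 2 * (b j - q)) :=
    sum_pos' (fun j _ => intCast_mul_add_two_mul_nonneg _ (hb j).1.le (hb j).2)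
      ⟨j₀, mem_univ _, intCast_mul_add_two_mul_pos hj₀ (hb j₀).1⟩
  calc ∑ j, b j ^ 2
      < ∑ j, b j ^ 2 + ∑ j, (k j : ℝ) * (k j + 2 * (b j - q)) + 2 * q * ∑ j, (k j : ℝ) := by
        rw [hsumℝ]; linarith
    _ = ∑ j, (b j + k j) ^ 2 := by
        rw [mul_sum, ← sum_add_distrib, ← sum_add_distrib]
        exact sum_congr rfl fun j _ => by ring

/-- If all `b_j` lie in a half-open interval `(q - 1/2, q + 1/2]` of length 1, then
any nontrivial zero-sum integer shift strictly increases `Σ_j (b_j + k_j)²`; in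
particular the zero tuple is the unique zero-sum minimizer of `Σ_j (b_j + n_j)²`. -/
theorem zero_sum_shift_strict_min
    (m : ℕ) (q : ℝ) (b : Fin (m+1) → ℝ)
    (hb : ∀ j, -(1/2 : ℝ) < b j - q ∧ b j - q ≤ 1/2)
    (k : Fin (m+1) → ℤ) (hsum : (∑ j, k j) = 0) (hne : k ≠ 0) :
    ((∑ j, b j ^ 2) < ∑ j, (b j + (k j : ℝ)) ^ 2) ∧
      ∀ n : Fin (m+1) → ℤ, (∑ j, n j) = 0 →
        ((∑ j, (b j + (n j : ℝ)) ^ 2) ≤ ∑ j, b j ^ 2) → n = 0 :=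
  ⟨sum_sq_lt_sum_add_intCast_sq hb hsum hne, fun _ hn hle =>
    by_contra fun hn₀ => (sum_sq_lt_sum_add_intCast_sq hb hn hn₀).not_ge hle⟩
end

section
/- Let m ≥ 0, q ∈ ℝ, and b_0,…,b_m ∈ ℝ satisfy −1/2 ≤ b_j − q ≤ 1/2 for all j. Let k_0,…,k_m be integers with Σ_{j=0}^m k_j = 0. Then Σ_{j=0}^m (b_j + k_j)² ≥ Σ_{j=0}^m b_j². -/
open Finset

/-- Writing `k² + 2ck = (1/2 + c)(k² + k) + (1/2 - c)(k² - k)` exhibits it as a nonnegative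
combination of `k² ± k`, which are nonnegative for integers. -/
theorem Int.sq_add_two_mul_nonneg {K : Type*} [Field K] [LinearOrder K] [IsStrictOrderedRing K]
    {c : K} (hc : -(1/2 : K) ≤ c ∧ c ≤ 1/2) (k : ℤ) :
    0 ≤ (k : K) ^ 2 + 2 * c * k := by
  have hk : (k : K) ≤ (k : K) ^ 2 := by exact_mod_cast Int.le_self_sq k
  have hnk : -(k : K) ≤ (k : K) ^ 2 := by exact_mod_cast (neg_sq k ▸ Int.le_self_sq (-k))
  nlinarith [mul_nonneg (by linarith : (0 : K) ≤ 1/2 + c) (sub_nonneg.2 hk),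
    mul_nonneg (by linarith : (0 : K) ≤ 1/2 - c) (sub_nonneg.2 hnk)]

theorem Finset.sum_add_sq_sub_sum_sq_of_sum_eq_zero {ι R : Type*} [CommRing R] (s : Finset ι)
    (b k : ι → R) (q : R) (hk : ∑ j ∈ s, k j = 0) :
    ∑ j ∈ s, (b j + k j) ^ 2 - ∑ j ∈ s, b j ^ 2 = ∑ j ∈ s, (k j ^ 2 + 2 * (b j - q) * k j) := by
  have hq : ∑ j ∈ s, (k j ^ 2 + 2 * (b j - q) * k j)
      = ∑ j ∈ s, (k j ^ 2 + 2 * b j * k j) - 2 * q * ∑ j ∈ s, k j := by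
    rw [mul_sum, ← sum_sub_distrib]
    exact sum_congr rfl fun j _ => by ring
  rw [hq, hk, mul_zero, sub_zero, ← sum_sub_distrib]
  exact sum_congr rfl fun j _ => by ring

/-- If all `b_j` lie in a closed interval `[q - 1/2, q + 1/2]` of length 1, then any
zero-sum integer shift does not decrease `Σ_j (b_j + k_j)²`. -/
theorem zero_sum_shift_min
    (m : ℕ) (q : ℝ) (b : Fin (m+1) → ℝ)
    (hb : ∀ j, -(1/2 : ℝ) ≤ b j - q ∧ b j - q ≤ 1/2)
    (k : Fin (m+1) → ℤ) (hsum : (∑ j, k j) = 0) :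
    (∑ j, b j ^ 2) ≤ ∑ j, (b j + (k j : ℝ)) ^ 2 := by
  have hk : ∑ j, (k j : ℝ) = 0 := by exact_mod_cast hsum
  rw [← sub_nonneg, sum_add_sq_sub_sum_sq_of_sum_eq_zero univ b _ q hk]
  exact sum_nonneg fun j _ => Int.sq_add_two_mul_nonneg (hb j) (k j)
end

section
/- For every n ≥ 1, the Hankel determinant of the constant weight 1 on [−1,1] satisfies det(∫_{−1}^1 x^{j+k} dx)_{j,k=0}^{n−1} = 2^{n²} Π_{k=0}^{n−1} k!³/(n+k)!. -/
open Complex Real Filter Finset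

noncomputable section

/-- The `n`-dimensional Hankel determinant of a weight `w` on `[-1,1]`. -/
def hankelDet (w : ℝ → ℂ) (n : ℕ) : ℂ :=
  Matrix.det (Matrix.of fun j k : Fin n =>
    ∫ x in (-1:ℝ)..1, (x : ℂ) ^ ((j : ℕ) + (k : ℕ)) * w x)

/-!
The odd moments of the weight `1` vanish, so ordering the indices by parity makes the Hankel
matrix block diagonal, with blocks `(2 / (2a + 2b + 2r + 1))_{a,b}` for `r = 0, 1`: twice the
Cauchy matrix `1 / (x a + y b)` with `x a = 2a`, `y b = 2b + 2r + 1`. The Schur complement of the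
corner entry of a Cauchy matrix is again a Cauchy matrix, rescaled by diagonal matrices, so
enlarging a block by one index multiplies its determinant by an explicit product. For the block
which contains the index `n` that product is `hₙ = 2^(2n+1) n!⁴ / ((2n)! (2n+1)!)`, the squared
norm of the monic Legendre polynomial of degree `n`. Both sides of the theorem are `∏_{k<n} hₖ`.
-/

open Matrix Nat

def cauchyMatrix {K : Type*} [Field K] (x y : ℕ → K) (m : ℕ) : Matrix (Fin m) (Fin m) K :=
  of fun i j => (x i + y j)⁻¹

theorem det_cauchyMatrix_succ {K : Type*} [Field K] (x y : ℕ → K) (m : ℕ)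
    (hxy : ∀ i ≤ m, ∀ j ≤ m, x i + y j ≠ 0) :
    (cauchyMatrix x y (m + 1)).det = (cauchyMatrix x y m).det *
      ((x m + y m)⁻¹ * ∏ i ∈ range m, (x m - x i) * (y m - y i) / ((x i + y m) * (x m + y i))) := by
  let M := (cauchyMatrix x y (m + 1)).submatrix (finSumFinEquiv : Fin m ⊕ Fin 1 ≃ _) finSumFinEquiv
  have hmm : x m + y m ≠ 0 := hxy m le_rfl m le_rfl
  let _ : Invertible M.toBlocks₂₂ :=
    ⟨of fun _ _ => x m + y m,
      by ext i j; fin_cases i; fin_cases j; simp [M, cauchyMatrix, toBlocks₂₂, mul_apply, hmm],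
      by ext i j; fin_cases i; fin_cases j; simp [M, cauchyMatrix, toBlocks₂₂, mul_apply, hmm]⟩
  have hschur : M.toBlocks₁₁ - M.toBlocks₁₂ * ⅟M.toBlocks₂₂ * M.toBlocks₂₁ =
      diagonal (fun i : Fin m => (x m - x i) / (x i + y m)) * cauchyMatrix x y m *
        diagonal (fun j : Fin m => (y m - y j) / (x m + y j)) := by
    change M.toBlocks₁₁ - M.toBlocks₁₂ * (of fun _ _ => x m + y m) * M.toBlocks₂₁ = _
    ext i j
    have hi := hxy i (by omega) m le_rfl
    have hj := hxy m le_rfl j (by omega)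
    have hij := hxy i (by omega) j (by omega)
    simp only [M, cauchyMatrix, toBlocks₁₁, toBlocks₁₂, toBlocks₂₁, Matrix.sub_apply, mul_apply,
      submatrix_apply, of_apply, finSumFinEquiv_apply_left, finSumFinEquiv_apply_right,
      Fin.val_castAdd, Fin.val_natAdd, Fin.val_eq_zero, add_zero, univ_unique, sum_const,
      card_singleton, one_smul, diagonal, ite_mul, mul_ite, zero_mul, mul_zero, sum_ite_eq,
      sum_ite_eq', mem_univ, ↓reduceIte]
    field_simp
    ring
  have hcorner : M.toBlocks₂₂.det = (x m + y m)⁻¹ := by simp [M, cauchyMatrix, toBlocks₂₂]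
  calc (cauchyMatrix x y (m + 1)).det = M.det := (det_submatrix_equiv_self _ _).symm
    _ = _ := by
      rw [← fromBlocks_toBlocks M, det_fromBlocks₂₂, hschur, det_mul, det_mul, det_diagonal,
        det_diagonal, hcorner, Fin.prod_univ_eq_prod_range (fun i => (x m - x i) / (x i + y m)),
        Fin.prod_univ_eq_prod_range (fun j => (y m - y j) / (x m + y j))]
      simp only [mul_div_mul_comm, prod_mul_distrib]
      ring

def hankelMatrix {R : Type*} (μ : ℕ → R) (n : ℕ) : Matrix (Fin n) (Fin n) R :=
  of fun j k => μ (j + k)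

def finEvenOddEquiv (n : ℕ) : Fin ((n + 1) / 2) ⊕ Fin (n / 2) ≃ Fin n where
  toFun := Sum.elim (fun a => ⟨2 * a, by omega⟩) (fun b => ⟨2 * b + 1, by omega⟩)
  invFun k := if h : k.val % 2 = 0 then .inl ⟨k / 2, by omega⟩ else .inr ⟨k / 2, by omega⟩
  left_inv := by
    rintro (a | b)
    · simp
    · simp only [Sum.elim_inr, mul_add_mod_self_left, mod_succ, one_ne_zero, ↓reduceDIte,
        Sum.inr.injEq, Fin.ext_iff]
      omega
  right_inv k := by
    by_cases h : k.val % 2 = 0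
    · simp only [h, ↓reduceDIte, Sum.elim_inl, Fin.ext_iff]
      omega
    · simp only [h, ↓reduceDIte, Sum.elim_inr, Fin.ext_iff]
      omega

theorem det_hankelMatrix_of_odd_eq_zero {R : Type*} [CommRing R] (μ : ℕ → R)
    (hμ : ∀ m, Odd m → μ m = 0) (n : ℕ) :
    (hankelMatrix μ n).det = (hankelMatrix (fun k => μ (2 * k)) ((n + 1) / 2)).det *
      (hankelMatrix (fun k => μ (2 * k + 2)) (n / 2)).det := by
  rw [← det_submatrix_equiv_self (finEvenOddEquiv n), ← det_fromBlocks_zero₁₂]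
  congr 1
  ext (a | a) (b | b)
  · show μ (2 * a + 2 * b) = μ (2 * (a + b))
    rw [mul_add]
  · show μ (2 * a + (2 * b + 1)) = 0
    exact hμ _ ⟨a + b, by ring⟩
  · show μ (2 * a + 1 + 2 * b) = 0
    exact hμ _ ⟨a + b, by ring⟩
  · show μ (2 * a + 1 + (2 * b + 1)) = μ (2 * (a + b) + 2)
    ring_nf

theorem prod_range_even_mul_prod_range_odd {M : Type*} [CommMonoid M] (f : ℕ → M) (n : ℕ) :
    (∏ k ∈ range ((n + 1) / 2), f (2 * k)) * ∏ k ∈ range (n / 2), f (2 * k + 1) =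
      ∏ k ∈ range n, f k := by
  have htwo (m : ℕ) :
      ∏ k ∈ range (2 * m), f k = (∏ k ∈ range m, f (2 * k)) * ∏ k ∈ range m, f (2 * k + 1) := by
    induction m with
    | zero => simp
    | succ m ih =>
      rw [mul_add, mul_one, prod_range_succ, prod_range_succ, ih, prod_range_succ, prod_range_succ]
      ac_rfl
  obtain ⟨m, rfl | rfl⟩ := n.even_or_odd'
  · rw [show (2 * m + 1) / 2 = m by omega, show 2 * m / 2 = m by omega, htwo]
  · rw [show (2 * m + 1 + 1) / 2 = m + 1 by omega, show (2 * m + 1) / 2 = m by omega,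
      prod_range_succ, prod_range_succ _ (2 * m), htwo]
    ac_rfl

theorem factorial_two_mul_eq_prod_odd (k : ℕ) :
    (2 * k)! = 2 ^ k * k ! * ∏ i ∈ range k, (2 * i + 1) := by
  induction k with
  | zero => simp
  | succ k ih =>
    rw [mul_add, mul_one, factorial_succ, factorial_succ, ih, factorial_succ, prod_range_succ]
    ring

theorem factorial_two_mul_add_eq_prod_odd {m r : ℕ} (hr : r ≤ 1) :
    (2 * m + r)! = 2 ^ m * m ! * ∏ i ∈ range (m + r), (2 * i + 1) := by
  obtain rfl | rfl : r = 0 ∨ r = 1 := by omega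
  · exact factorial_two_mul_eq_prod_odd m
  · rw [factorial_succ, factorial_two_mul_eq_prod_odd, prod_range_succ]
    ring

theorem prod_range_two_mul_natCast_sub {K : Type*} [CommRing K] (m : ℕ) :
    ∏ i ∈ range m, 2 * ((m : K) - i) = 2 ^ m * m ! := by
  rw [prod_mul_distrib, prod_const, card_range, ← descPochhammer_eval_eq_prod_range,
    descPochhammer_eval_eq_descFactorial, descFactorial_self]

theorem prod_range_factorial_add_succ (n : ℕ) :
    (∏ k ∈ range (n + 1), (n + 1 + k)!) * n ! =
      (∏ k ∈ range n, (n + k)!) * (2 * n)! * (2 * n + 1)! := by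
  have h := prod_range_succ' (fun k => (n + k)!) (n + 1)
  rw [prod_range_succ, prod_range_succ] at h
  rw [show 2 * n = n + n by ring, show n + n + 1 = n + (n + 1) by ring, h]
  exact congrArg (· * n !) (prod_congr rfl fun k _ => by rw [add_right_comm, add_assoc])

def monicLegendreNormSq (K : Type*) [Field K] (n : ℕ) : K :=
  2 ^ (2 * n + 1) * (n ! : K) ^ 4 / ((2 * n)! * (2 * n + 1)!)

theorem monicLegendreNormSq_two_mul_add {K : Type*} [Field K] [CharZero K] {m r : ℕ}
    (hr : r ≤ 1) :
    monicLegendreNormSq K (2 * m + r) =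
      2 / (2 * (2 * m + r) + 1) * ∏ i ∈ range m, (2 * ((m : K) - i) / (2 * (m + r + i) + 1)) ^ 2 := by
  set n := 2 * m + r with hn
  set O := ∏ i ∈ range (m + r), (2 * i + 1) with hOdef
  set Q := ∏ i ∈ range m, (2 * (m + r + i) + 1)
  have hodd : ∏ i ∈ range n, (2 * i + 1) = O * Q := by
    rw [← prod_range_add, show m + r + m = n by omega]
  have hQ : ∏ i ∈ range m, (2 * ((m : K) + r + i) + 1) = (Q : K) := by simp [Q]
  have hO0 : (O : K) ≠ 0 := Nat.cast_ne_zero.2 (prod_pos fun i _ => by omega).ne'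
  have hQ0 : (Q : K) ≠ 0 := Nat.cast_ne_zero.2 (prod_pos fun i _ => by omega).ne'
  rw [prod_pow, prod_div_distrib, prod_range_two_mul_natCast_sub, hQ, monicLegendreNormSq,
    factorial_succ, factorial_two_mul_eq_prod_odd, hodd, hn, factorial_two_mul_add_eq_prod_odd hr,
    ← hOdef]
  clear_value O Q
  push_cast
  field_simp
  ring

theorem two_pow_sq_mul_prod_factorial_div_eq_prod_monicLegendreNormSq {K : Type*} [Field K]
    [CharZero K] (n : ℕ) :
    2 ^ (n ^ 2) * ∏ k ∈ range n, ((k ! : K) ^ 3 / (n + k)!) =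
      ∏ k ∈ range n, monicLegendreNormSq K k := by
  induction n with
  | zero => simp
  | succ n ih =>
    have hshift := congrArg (Nat.cast : ℕ → K) (prod_range_factorial_add_succ n)
    push_cast at hshift
    rw [prod_range_succ (monicLegendreNormSq K) n, ← ih, monicLegendreNormSq, prod_div_distrib,
      prod_div_distrib, prod_range_succ]
    have h1 : (∏ k ∈ range n, ((n + k)! : K)) ≠ 0 :=
      prod_ne_zero_iff.2 fun k _ => Nat.cast_ne_zero.2 (factorial_ne_zero _)
    have h2 : (∏ k ∈ range (n + 1), ((n + 1 + k)! : K)) ≠ 0 :=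
      prod_ne_zero_iff.2 fun k _ => Nat.cast_ne_zero.2 (factorial_ne_zero _)
    have h3 : ((2 * n)! : K) ≠ 0 := Nat.cast_ne_zero.2 (factorial_ne_zero _)
    have h4 : ((2 * n + 1)! : K) ≠ 0 := Nat.cast_ne_zero.2 (factorial_ne_zero _)
    field_simp
    rw [show (n + 1) ^ 2 = n ^ 2 + (2 * n + 1) by ring, pow_add]
    linear_combination
      -(2 ^ n ^ 2 * 2 ^ (2 * n + 1) * (∏ k ∈ range n, (k ! : K) ^ 3) * (n ! : K) ^ 3) * hshift

def legendreMoment (K : Type*) [Field K] (m : ℕ) : K := if Even m then 2 / (m + 1) else 0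

theorem integral_pow_eq_legendreMoment (m : ℕ) :
    ∫ x in (-1 : ℝ)..1, (x : ℂ) ^ m = legendreMoment ℂ m := by
  simp_rw [← ofReal_pow]
  rw [intervalIntegral.integral_ofReal, integral_pow, legendreMoment]
  rcases m.even_or_odd with hm | hm
  · rw [if_pos hm, hm.add_one.neg_one_pow]
    push_cast
    ring
  · rw [if_neg (Nat.not_even_iff_odd.2 hm), hm.add_one.neg_one_pow]
    push_cast
    ring

theorem hankelMatrix_legendreMoment_eq_smul_cauchyMatrix {K : Type*} [Field K] (r m : ℕ) :
    hankelMatrix (fun k => legendreMoment K (2 * k + 2 * r)) m =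
      (2 : K) • cauchyMatrix (fun i : ℕ => 2 * (i : K)) (fun j : ℕ => 2 * (j : K) + 2 * r + 1) m := by
  ext a b
  have hev : Even (2 * (a + b : ℕ) + 2 * r) := ⟨a + b + r, by ring⟩
  simp only [hankelMatrix, cauchyMatrix, legendreMoment, of_apply, Matrix.smul_apply, smul_eq_mul,
    if_pos hev]
  push_cast
  ring

theorem det_hankelMatrix_legendreMoment {K : Type*} [Field K] [CharZero K] {r : ℕ} (hr : r ≤ 1)
    (m : ℕ) : (hankelMatrix (fun k => legendreMoment K (2 * k + 2 * r)) m).det =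
      ∏ k ∈ range m, monicLegendreNormSq K (2 * k + r) := by
  induction m with
  | zero => simp
  | succ m ih =>
    have hxy : ∀ i ≤ m, ∀ j ≤ m, (2 * i : K) + (2 * j + 2 * r + 1) ≠ 0 := fun i _ j _ => by
      exact_mod_cast (show 2 * i + (2 * j + 2 * r + 1) ≠ 0 by omega)
    have hterm : ∀ i ∈ range m, (2 * (m : K) - 2 * i) * (2 * m + 2 * r + 1 - (2 * i + 2 * r + 1)) /
        ((2 * i + (2 * m + 2 * r + 1)) * (2 * m + (2 * i + 2 * r + 1))) =
        (2 * ((m : K) - i) / (2 * (m + r + i) + 1)) ^ 2 := fun i _ => by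
      rw [div_pow]
      congr 1 <;> ring
    rw [prod_range_succ, ← ih, hankelMatrix_legendreMoment_eq_smul_cauchyMatrix, det_smul,
      det_cauchyMatrix_succ _ _ m hxy, prod_congr rfl hterm,
      hankelMatrix_legendreMoment_eq_smul_cauchyMatrix, det_smul, monicLegendreNormSq_two_mul_add hr,
      Fintype.card_fin, Fintype.card_fin]
    ring

theorem hankel_det_one_general (n : ℕ) :
    hankelDet (fun _ => 1) n =
      2 ^ (n ^ 2) * ∏ k ∈ Finset.range n,
        ((Nat.factorial k : ℂ)) ^ 3 / ((Nat.factorial (n + k) : ℂ)) := by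
  have hentries : hankelDet (fun _ => 1) n = (hankelMatrix (legendreMoment ℂ) n).det := by
    simp only [hankelDet, mul_one, integral_pow_eq_legendreMoment]
    rfl
  have hodd (m : ℕ) (hm : Odd m) : legendreMoment ℂ m = 0 := if_neg (Nat.not_even_iff_odd.2 hm)
  have hevenBlock : (hankelMatrix (fun k => legendreMoment ℂ (2 * k)) ((n + 1) / 2)).det =
      ∏ k ∈ range ((n + 1) / 2), monicLegendreNormSq ℂ (2 * k) :=
    det_hankelMatrix_legendreMoment (r := 0) zero_le_one _
  have hoddBlock : (hankelMatrix (fun k => legendreMoment ℂ (2 * k + 2)) (n / 2)).det =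
      ∏ k ∈ range (n / 2), monicLegendreNormSq ℂ (2 * k + 1) :=
    det_hankelMatrix_legendreMoment (r := 1) le_rfl _
  rw [hentries, det_hankelMatrix_of_odd_eq_zero _ hodd, hevenBlock, hoddBlock,
    prod_range_even_mul_prod_range_odd, two_pow_sq_mul_prod_factorial_div_eq_prod_monicLegendreNormSq]

/-- The Hankel determinant of the constant weight `1` on `[-1,1]`:
`D_n(1) = 2^{n²} Π_{k=0}^{n-1} k!³/(n+k)!`. -/
theorem hankel_det_one (n : ℕ) (hn : 1 ≤ n) :
    hankelDet (fun _ => 1) n =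
      2 ^ (n ^ 2) * ∏ k ∈ Finset.range n,
        ((Nat.factorial k : ℂ)) ^ 3 / ((Nat.factorial (n + k) : ℂ)) :=
  hankel_det_one_general n
end
end
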